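/- Let A and B be real symmetric PSD matrices, J a compatible matrix. Then ‖A J B‖_F² ≤ λ_max(A) λ_max(B) · ⟨J, A J B⟩_F, where ⟨·,·⟩_F is the Frobenius inner product. -/

import Mathlib

open Matrix

noncomputable def frobNorm {p m : ℕ} (M : Matrix (Fin p) (Fin m) ℝ) : ℝ :=
  Real.sqrt (∑ i, ∑ j, (M i j) ^ 2)

/-- Largest eigenvalue of a real symmetric PSD matrix. -/
noncomputable def lamMax {p : ℕ} (A : Matrix (Fin (p + 1)) (Fin (p + 1)) ℝ)
    (hA : A.PosSemidef) : ℝ :=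
  (Finset.univ : Finset (Fin (p + 1))).sup' Finset.univ_nonempty
    hA.isHermitian.eigenvalues

/-
With `C = J B² Jᵀ` and `D = Jᵀ A J`, both positive semidefinite, cyclicity of the trace gives
`‖A J B‖_F² = tr (A² C)`, `tr (A C) = tr (B² D)` and `⟨J, A J B⟩_F = tr (B D)`. In the Loewner
order `A² ≤ λ_max(A) A` and `B² ≤ λ_max(B) B` (functional calculus: `x² ≤ λ x` on the spectrum),
and `X ↦ tr (X P)` is monotone for positive semidefinite `P`, whence
`tr (A² C) ≤ λ_max(A) tr (A C) = λ_max(A) tr (B² D) ≤ λ_max(A) λ_max(B) tr (B D)`.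
-/

theorem sq_le_smul_of_spectrum_le {A : Type*} [TopologicalSpace A] [Ring A] [StarRing A]
    [PartialOrder A] [StarOrderedRing A] [Algebra ℝ A]
    [ContinuousFunctionalCalculus ℝ A IsSelfAdjoint] [NonnegSpectrumClass ℝ A]
    {a : A} {r : ℝ} (ha : 0 ≤ a) (h : ∀ x ∈ spectrum ℝ a, x ≤ r) : a ^ 2 ≤ r • a :=
  calc a ^ 2 = cfc (· ^ 2 : ℝ → ℝ) a := (cfc_pow_id a 2).symm
    _ ≤ cfc (r * ·) a := cfc_mono fun x hx ↦ by
        nlinarith [spectrum_nonneg_of_nonneg ha hx, h x hx]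
    _ = r • a := cfc_const_mul_id r a

open scoped ComplexOrder MatrixOrder

namespace Matrix

theorem trace_transpose_mul_eq_sum {m n R : Type*} [Fintype m] [Fintype n]
    [NonUnitalNonAssocSemiring R] (X Y : Matrix m n R) :
    (Xᵀ * Y).trace = ∑ i, ∑ j, X i j * Y i j := by
  simp only [trace, diag, mul_apply, transpose_apply]
  exact Finset.sum_comm

variable {n 𝕜 : Type*} [Fintype n] [RCLike 𝕜]

theorem PosSemidef.trace_mul_nonneg {M C : Matrix n n 𝕜} (hM : M.PosSemidef) (hC : C.PosSemidef) :
    0 ≤ (M * C).trace := by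
  classical
  obtain ⟨S, rfl⟩ := CStarAlgebra.nonneg_iff_eq_star_mul_self.mp hM.nonneg
  rw [← trace_mul_cycle]
  exact (hC.mul_mul_conjTranspose_same S).trace_nonneg

theorem trace_mul_le_trace_mul_of_le {X Y C : Matrix n n 𝕜} (hXY : X ≤ Y) (hC : C.PosSemidef) :
    (X * C).trace ≤ (Y * C).trace := by
  have := hXY.trace_mul_nonneg hC
  rwa [sub_mul, trace_sub, sub_nonneg] at this

end Matrix

theorem eigenvalues_le_lamMax {p : ℕ} {A : Matrix (Fin (p + 1)) (Fin (p + 1)) ℝ}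
    (hA : A.PosSemidef) (i : Fin (p + 1)) : hA.isHermitian.eigenvalues i ≤ lamMax A hA :=
  Finset.le_sup' _ (Finset.mem_univ i)

theorem lamMax_nonneg {p : ℕ} {A : Matrix (Fin (p + 1)) (Fin (p + 1)) ℝ} (hA : A.PosSemidef) :
    0 ≤ lamMax A hA :=
  (hA.eigenvalues_nonneg 0).trans (eigenvalues_le_lamMax hA 0)

theorem sq_le_lamMax_smul {p : ℕ} {A : Matrix (Fin (p + 1)) (Fin (p + 1)) ℝ}
    (hA : A.PosSemidef) : A ^ 2 ≤ lamMax A hA • A :=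
  sq_le_smul_of_spectrum_le hA.nonneg fun x hx ↦ by
    obtain ⟨i, rfl⟩ := hA.isHermitian.spectrum_real_eq_range_eigenvalues ▸ hx
    exact eigenvalues_le_lamMax hA i

theorem frobNorm_sq {p m : ℕ} (M : Matrix (Fin p) (Fin m) ℝ) :
    frobNorm M ^ 2 = (Mᵀ * M).trace := by
  rw [frobNorm, Real.sq_sqrt (by positivity), trace_transpose_mul_eq_sum]
  simp only [sq]

/-- For symmetric PSD `A`, `B` and compatible `J`:
`‖A J B‖_F² ≤ λ_max(A) λ_max(B) ⟨J, A J B⟩_F`. -/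
theorem stmt_18 {p m : ℕ}
    (A : Matrix (Fin (p + 1)) (Fin (p + 1)) ℝ)
    (B : Matrix (Fin (m + 1)) (Fin (m + 1)) ℝ)
    (hA : A.PosSemidef) (hB : B.PosSemidef)
    (J : Matrix (Fin (p + 1)) (Fin (m + 1)) ℝ) :
    frobNorm (A * J * B) ^ 2
      ≤ lamMax A hA * lamMax B hB * ∑ i, ∑ j, J i j * (A * J * B) i j := by
  have hAt : Aᵀ = A := hA.isHermitian.eq
  have hBt : Bᵀ = B := hB.isHermitian.eq
  have hC : (J * B ^ 2 * Jᵀ).PosSemidef := (hB.pow 2).mul_mul_conjTranspose_same J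
  have hD : (Jᵀ * A * J).PosSemidef := hA.conjTranspose_mul_mul_same J
  calc frobNorm (A * J * B) ^ 2 = (A ^ 2 * (J * B ^ 2 * Jᵀ)).trace := by
        have := trace_mul_comm (B * Jᵀ) (A ^ 2 * J * B)
        rw [frobNorm_sq, transpose_mul, transpose_mul, hAt, hBt]
        simp only [sq, Matrix.mul_assoc] at this ⊢
        exact this
    _ ≤ (lamMax A hA • A * (J * B ^ 2 * Jᵀ)).trace :=
        trace_mul_le_trace_mul_of_le (sq_le_lamMax_smul hA) hC
    _ = lamMax A hA * (B ^ 2 * (Jᵀ * A * J)).trace := by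
        have := trace_mul_comm (A * J) (B ^ 2 * Jᵀ)
        rw [smul_mul, trace_smul, smul_eq_mul]
        simp only [Matrix.mul_assoc] at this ⊢
        rw [this]
    _ ≤ lamMax A hA * (lamMax B hB • B * (Jᵀ * A * J)).trace :=
        mul_le_mul_of_nonneg_left (trace_mul_le_trace_mul_of_le (sq_le_lamMax_smul hB) hD)
          (lamMax_nonneg hA)
    _ = lamMax A hA * lamMax B hB * ∑ i, ∑ j, J i j * (A * J * B) i j := by
        rw [smul_mul, trace_smul, smul_eq_mul, ← trace_transpose_mul_eq_sum,
          trace_mul_comm, mul_assoc]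
        simp only [Matrix.mul_assoc]
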